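/- arXiv:2505.20699 — 2 statements merged into one kernel-verified Lean document; each statement's English description precedes it below -/
import Mathlib

section
/- Let Δ be a flag Eulerian simplicial complex of dimension 4 with n vertices. Then f_1(Δ) < n²/4 + 3n; equivalently, 4·f_1(Δ) < n² + 12n. -/
/-- A finite abstract simplicial complex on vertex set `Fin n`: a collection of subsets of
`Fin n` (the faces) closed under taking subsets and containing every singleton. -/
structure AbsComplex (n : ℕ) where
  faces : Finset (Finset (Fin n))
  down_closed : ∀ F ∈ faces, ∀ G ⊆ F, G ∈ faces
  singleton_mem : ∀ v : Fin n, ({v} : Finset (Fin n)) ∈ faces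

namespace AbsComplex

variable {n : ℕ}

/-- `fNum Δ i` is the number of faces of `Δ` of cardinality `i + 1`
(i.e. of dimension `i`). -/
def fNum (Δ : AbsComplex n) (i : ℕ) : ℕ :=
  (Δ.faces.filter fun F => F.card = i + 1).card

/-- A missing face of `Δ`: a set which is not a face but all of whose proper subsets
are faces. -/
def IsMissing (Δ : AbsComplex n) (F : Finset (Fin n)) : Prop :=
  F ∉ Δ.faces ∧ ∀ G ⊂ F, G ∈ Δ.faces

/-- `mNum Δ i` is the number of missing faces of `Δ` of cardinality `i + 1`
(i.e. of dimension `i`). -/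
noncomputable def mNum (Δ : AbsComplex n) (i : ℕ) : ℕ :=
  {F : Finset (Fin n) | Δ.IsMissing F ∧ F.card = i + 1}.ncard

/-- The faces of the link of the face `F` in `Δ`: all faces `G` with `G ∩ F = ∅`
and `G ∪ F` a face. -/
def linkFaces (Δ : AbsComplex n) (F : Finset (Fin n)) : Finset (Finset (Fin n)) :=
  Δ.faces.filter fun G => G ∩ F = ∅ ∧ G ∪ F ∈ Δ.faces

/-- The reduced Euler characteristic `χ̃ = −1 + f₀ − f₁ + f₂ − ⋯` of a (downward closed,
nonempty) collection of faces, computed as `∑_F (−1)^{|F|−1}` over all faces `F`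
(including the empty face). -/
def reducedEuler (s : Finset (Finset (Fin n))) : ℤ :=
  ∑ F ∈ s, (-1 : ℤ) ^ (F.card + 1)

/-- `Δ.IsEulerianDim D` says that `Δ` is an Eulerian complex of dimension `D`: every face has
cardinality at most `D + 1`, some face has cardinality `D + 1`, and for every face `F`
(including the empty face) the reduced Euler characteristic of the link of `F` equals
`(−1)^{D − |F|}` (written as `(−1)^{D + |F|}`, which has the same parity). -/
def IsEulerianDim (Δ : AbsComplex n) (D : ℕ) : Prop :=
  (∀ F ∈ Δ.faces, F.card ≤ D + 1) ∧ (∃ F ∈ Δ.faces, F.card = D + 1) ∧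
    ∀ F ∈ Δ.faces, reducedEuler (Δ.linkFaces F) = (-1 : ℤ) ^ (D + F.card)

/-- `Δ` is `j`-neighborly: every `j`-element subset of the vertex set is a face. -/
def Neighborly (Δ : AbsComplex n) (j : ℕ) : Prop :=
  ∀ S : Finset (Fin n), S.card = j → S ∈ Δ.faces

/-- `Δ` is flag: every missing face has cardinality `2`. -/
def Flag (Δ : AbsComplex n) : Prop :=
  ∀ F : Finset (Fin n), Δ.IsMissing F → F.card = 2

end AbsComplex

/-!
Write `f₁, f₂` for the numbers of edges and triangles and `d(v)` for the degree of `v` in the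
1-skeleton. Summing the Eulerian condition over the faces of sizes `0`, `2` and `3` gives the
Dehn–Sommerville relation `3 f₂ = 12 f₁ − 30 n + 60`. In a flag complex every common
neighbour of an edge `uv` spans a triangle with it, so `d(u) + d(v) ≤ n + #(triangles ⊇ uv)`,
and summing over the edges gives `∑ d(v)² ≤ n f₁ + 3 f₂`. With Cauchy–Schwarz,
`(2 f₁)² ≤ n ∑ d(v)²`, this yields `4 f₁² ≤ (n² + 12 n) f₁ − 30 n (n − 2)`, which forces
`4 f₁ < n² + 12 n` as soon as `n > 2`.
-/

open Finset

theorem sum_mul_card_filter_mem {α : Type*} [Fintype α] [DecidableEq α] (B : Finset (Finset α))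
    (g : α → ℕ) :
    ∑ a, g a * #{s ∈ B | a ∈ s} = ∑ s ∈ B, ∑ a ∈ s, g a := by
  rw [sum_comm' (t' := univ) (s' := fun a => {s ∈ B | a ∈ s}) (by simp)]
  simp [sum_const, mul_comm]

namespace AbsComplex

variable {n : ℕ} (Δ : AbsComplex n)

def faceCount (k : ℕ) : ℕ := #{F ∈ Δ.faces | F.card = k}

lemma faceCount_zero (h : ∅ ∈ Δ.faces) : Δ.faceCount 0 = 1 := by
  rw [faceCount, card_eq_one]
  refine ⟨∅, ext fun F => ?_⟩
  simp only [mem_filter, card_eq_zero, mem_singleton]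
  exact ⟨And.right, by rintro rfl; exact ⟨h, rfl⟩⟩

lemma faceCount_one : Δ.faceCount 1 = n := by
  have : {F ∈ Δ.faces | F.card = 1} = univ.map ⟨({·}), singleton_injective⟩ := by
    ext F
    simp only [mem_filter, card_eq_one, mem_map, mem_univ, true_and, Function.Embedding.coeFn_mk]
    constructor
    · rintro ⟨-, v, rfl⟩; exact ⟨v, rfl⟩
    · rintro ⟨v, rfl⟩; exact ⟨Δ.singleton_mem v, v, rfl⟩
  rw [faceCount, this, card_map, card_univ, Fintype.card_fin]

lemma reducedEuler_linkFaces (F : Finset (Fin n)) :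
    reducedEuler (Δ.linkFaces F)
      = ∑ H ∈ Δ.faces with F ⊆ H, (-1 : ℤ) ^ (H.card + F.card + 1) := by
  refine sum_nbij' (· ∪ F) (· \ F) ?_ ?_ ?_ ?_ ?_
  · intro G hG
    simp only [linkFaces, mem_filter] at hG ⊢
    exact ⟨hG.2.2, subset_union_right⟩
  · intro H hH
    simp only [linkFaces, mem_filter] at hH ⊢
    exact ⟨Δ.down_closed H hH.1 _ sdiff_subset, sdiff_inter_self _ _,
      by rw [sdiff_union_of_subset hH.2]; exact hH.1⟩
  · intro G hG
    simp only [linkFaces, mem_filter] at hG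
    exact union_sdiff_cancel_right (disjoint_iff_inter_eq_empty.mpr hG.2.1)
  · intro H hH
    simp only [mem_filter] at hH
    exact sdiff_union_of_subset hH.2
  · intro G hG
    simp only [linkFaces, mem_filter] at hG
    rw [card_union_of_disjoint (disjoint_iff_inter_eq_empty.mpr hG.2.1),
      show G.card + F.card + F.card + 1 = G.card + 1 + 2 * F.card by ring, pow_add _ (_ + 1),
      pow_mul]
    simp

lemma card_subfaces {H : Finset (Fin n)} (hH : H ∈ Δ.faces) (c : ℕ) :
    #{F ∈ Δ.faces | F.card = c ∧ F ⊆ H} = H.card.choose c := by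
  rw [← card_powersetCard]
  congr 1
  ext F
  simp only [mem_filter, mem_powersetCard]
  exact ⟨fun ⟨_, hc, hsub⟩ => ⟨hsub, hc⟩,
    fun ⟨hsub, hc⟩ => ⟨Δ.down_closed H hH F hsub, hc, hsub⟩⟩

lemma sum_card_superfaces (c k : ℕ) :
    ∑ F ∈ Δ.faces with F.card = c, #{H ∈ Δ.faces | H.card = k ∧ F ⊆ H}
      = Δ.faceCount k * k.choose c := by
  have := sum_card_bipartiteAbove_eq_sum_card_bipartiteBelow (r := (· ⊆ ·))
    (s := {F ∈ Δ.faces | F.card = c}) (t := {H ∈ Δ.faces | H.card = k})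
  simp only [bipartiteAbove, bipartiteBelow, filter_filter] at this
  rw [this, faceCount, sum_congr rfl fun H hH => ?_, sum_const, smul_eq_mul]
  obtain ⟨hHΔ, rfl⟩ := mem_filter.mp hH
  exact Δ.card_subfaces hHΔ c

variable {Δ}

theorem IsEulerianDim.sum_faceCount_mul_choose {D : ℕ} (hΔ : Δ.IsEulerianDim D) (c : ℕ) :
    ∑ k ∈ range (D + 2), (Δ.faceCount k * k.choose c : ℤ) * (-1) ^ (k + c + 1)
      = Δ.faceCount c * (-1) ^ (D + c) := by
  obtain ⟨hdim, -, hlink⟩ := hΔ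
  calc ∑ k ∈ range (D + 2), (Δ.faceCount k * k.choose c : ℤ) * (-1) ^ (k + c + 1)
      = ∑ F ∈ Δ.faces with F.card = c, ∑ k ∈ range (D + 2),
          (#{H ∈ Δ.faces | H.card = k ∧ F ⊆ H} : ℤ) * (-1) ^ (k + c + 1) := by
        rw [sum_comm]
        refine sum_congr rfl fun k _ => ?_
        rw [← sum_mul, ← Nat.cast_sum, sum_card_superfaces, Nat.cast_mul]
    _ = ∑ F ∈ Δ.faces with F.card = c, reducedEuler (Δ.linkFaces F) := by
        refine sum_congr rfl fun F hF => ?_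
        obtain ⟨-, rfl⟩ := mem_filter.mp hF
        rw [Δ.reducedEuler_linkFaces, ← sum_fiberwise_of_maps_to (g := card) (t := range (D + 2))
          fun H hH => mem_range.mpr (Nat.lt_succ_of_le (hdim H (mem_filter.mp hH).1))]
        refine sum_congr rfl fun k _ => ?_
        rw [filter_filter, sum_congr rfl fun H hH => by rw [(mem_filter.mp hH).2.2], sum_const,
          nsmul_eq_mul]
        simp_rw [and_comm]
    _ = Δ.faceCount c * (-1) ^ (D + c) := by
        rw [sum_congr rfl fun F hF => by rw [hlink F (mem_filter.mp hF).1, (mem_filter.mp hF).2],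
          sum_const, nsmul_eq_mul, faceCount]

theorem IsEulerianDim.dim_lt {D : ℕ} (hΔ : Δ.IsEulerianDim D) : D < n := by
  obtain ⟨F, -, hF⟩ := hΔ.2.1
  simpa [hF] using F.card_le_univ

theorem IsEulerianDim.dehn_sommerville_four (hΔ : Δ.IsEulerianDim 4) :
    3 * Δ.faceCount 3 + 30 * n = 12 * Δ.faceCount 2 + 60 := by
  obtain ⟨F, hF, -⟩ := hΔ.2.1
  have h0 := hΔ.sum_faceCount_mul_choose 0
  have h2 := hΔ.sum_faceCount_mul_choose 2
  have h3 := hΔ.sum_faceCount_mul_choose 3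
  simp only [sum_range_succ, sum_range_zero, faceCount_one,
    Δ.faceCount_zero (Δ.down_closed F hF ∅ (empty_subset F))] at h0 h2 h3
  norm_num [Nat.choose] at h0 h2 h3
  omega

theorem Flag.mem_faces_of_pairwise (hΔ : Δ.Flag) (s : Finset (Fin n))
    (hs : (s : Set (Fin n)).Pairwise fun x y => {x, y} ∈ Δ.faces) : s ∈ Δ.faces := by
  induction s using strongInduction with
  | H s ih =>
    by_contra hs'
    have hmissing : Δ.IsMissing s :=
      ⟨hs', fun t ht => ih t ht (hs.mono (coe_subset.mpr ht.subset))⟩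
    obtain ⟨x, y, hxy, rfl⟩ := card_eq_two.mp (hΔ s hmissing)
    exact hs' (hs (by simp) (by simp) hxy)

variable (Δ)

def neighbors (v : Fin n) : Finset (Fin n) := {w | w ≠ v ∧ {v, w} ∈ Δ.faces}

lemma card_neighbors (v : Fin n) :
    #(Δ.neighbors v) = #{e ∈ Δ.faces | e.card = 2 ∧ v ∈ e} := by
  have himage : {e ∈ Δ.faces | e.card = 2 ∧ v ∈ e} = (Δ.neighbors v).image ({v, ·}) := by
    ext e
    simp only [neighbors, mem_filter, mem_image, mem_univ, true_and]
    constructor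
    · rintro ⟨he, hcard, hv⟩
      obtain ⟨w, hw⟩ := card_eq_one.mp (by rw [card_erase_of_mem hv, hcard] : #(e.erase v) = 1)
      have hwv : w ≠ v := fun h => notMem_erase v e (hw ▸ h ▸ mem_singleton_self w)
      rw [← insert_erase hv, hw] at he ⊢
      exact ⟨w, ⟨hwv, he⟩, rfl⟩
    · rintro ⟨w, ⟨hwv, hw⟩, rfl⟩
      exact ⟨hw, card_pair hwv.symm, mem_insert_self v {w}⟩
  rw [himage, card_image_of_injOn]
  intro a ha b _ hab
  have : a ∈ ({v, b} : Finset (Fin n)) := by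
    rw [← show ({v, a} : Finset (Fin n)) = {v, b} from hab]; simp
  simp only [neighbors, coe_filter, mem_univ, true_and, Set.mem_ofPred_eq] at ha
  simpa [ha.1] using this

lemma sum_card_neighbors : ∑ v, #(Δ.neighbors v) = 2 * Δ.faceCount 2 := by
  have := sum_mul_card_filter_mem {e ∈ Δ.faces | e.card = 2} 1
  simp only [Pi.one_apply, one_mul, sum_const, smul_eq_mul, mul_one, filter_filter] at this
  simp_rw [← card_neighbors] at this
  rw [this, sum_congr rfl fun e he => (mem_filter.mp he).2, sum_const, smul_eq_mul, mul_comm,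
    faceCount]

variable {Δ}

theorem Flag.card_neighbors_add_card_neighbors_le (hΔ : Δ.Flag) {u v : Fin n} (huv : u ≠ v)
    (he : {u, v} ∈ Δ.faces) :
    #(Δ.neighbors u) + #(Δ.neighbors v) ≤ n + #{t ∈ Δ.faces | t.card = 3 ∧ {u, v} ⊆ t} := by
  have hunion : #(Δ.neighbors u ∪ Δ.neighbors v) ≤ n := by
    simpa using card_le_univ (Δ.neighbors u ∪ Δ.neighbors v)
  have hinter : #(Δ.neighbors u ∩ Δ.neighbors v)
      ≤ #{t ∈ Δ.faces | t.card = 3 ∧ {u, v} ⊆ t} := by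
    refine card_le_card_of_injOn (insert · {u, v}) (fun w hw => ?_) (fun a ha b _ hab => ?_)
    · simp only [neighbors, coe_inter, coe_filter, mem_univ, true_and, Set.mem_inter_iff,
        Set.mem_ofPred_eq] at hw
      obtain ⟨⟨hwu, hu⟩, hwv, hv⟩ := hw
      refine mem_filter.mpr ⟨hΔ.mem_faces_of_pairwise _ ?_, ?_, subset_insert w {u, v}⟩
      · simp only [coe_insert, coe_singleton, Set.pairwise_insert, Set.pairwise_singleton,
          Set.mem_insert_iff, Set.mem_singleton_iff, forall_eq_or_imp, forall_eq, pair_comm w]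
        exact ⟨⟨trivial, fun _ => ⟨he, pair_comm u v ▸ he⟩⟩, fun _ => ⟨hu, hu⟩,
          fun _ => ⟨hv, hv⟩⟩
      · rw [card_insert_of_notMem (by simp [hwu, hwv]), card_pair huv]
    · simp only [neighbors, coe_inter, coe_filter, mem_univ, true_and, Set.mem_inter_iff,
        Set.mem_ofPred_eq] at ha
      have : a ∈ insert b ({u, v} : Finset (Fin n)) := by
        rw [← show insert a ({u, v} : Finset (Fin n)) = insert b {u, v} from hab]; simp
      simpa [ha.1.1, ha.2.1] using this
  have := card_union_add_card_inter (Δ.neighbors u) (Δ.neighbors v)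
  omega

theorem Flag.sum_sq_card_neighbors_le (hΔ : Δ.Flag) :
    ∑ v, #(Δ.neighbors v) ^ 2 ≤ n * Δ.faceCount 2 + 3 * Δ.faceCount 3 := by
  calc ∑ v, #(Δ.neighbors v) ^ 2
      = ∑ e ∈ Δ.faces with e.card = 2, ∑ v ∈ e, #(Δ.neighbors v) := by
        simp_rw [← sum_mul_card_filter_mem, filter_filter, ← card_neighbors, sq]
    _ ≤ ∑ e ∈ Δ.faces with e.card = 2, (n + #{t ∈ Δ.faces | t.card = 3 ∧ e ⊆ t}) := by
        refine sum_le_sum fun e he => ?_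
        obtain ⟨he, hcard⟩ := mem_filter.mp he
        obtain ⟨u, v, huv, rfl⟩ := card_eq_two.mp hcard
        rw [sum_pair huv]
        exact hΔ.card_neighbors_add_card_neighbors_le huv he
    _ = n * Δ.faceCount 2 + 3 * Δ.faceCount 3 := by
        rw [sum_add_distrib, sum_card_superfaces, sum_const, smul_eq_mul,
          show Nat.choose 3 2 = 3 from rfl, mul_comm _ 3, mul_comm _ n]
        rfl

end AbsComplex

/-- A flag Eulerian complex `Δ` of dimension `4` with `n` vertices satisfies
`4·f_1(Δ) < n² + 12n` (i.e. `f_1 < n²/4 + 3n`). -/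
theorem statement9 {n : ℕ} (Δ : AbsComplex n) (hEul : Δ.IsEulerianDim 4) (hflag : Δ.Flag) :
    4 * Δ.fNum 1 < n ^ 2 + 12 * n := by
  have hn : 5 ≤ n := hEul.dim_lt
  have hrel := hEul.dehn_sommerville_four
  have hsq := hflag.sum_sq_card_neighbors_le
  have hcs := sq_sum_le_card_mul_sum_sq (s := univ) (f := fun v => #(Δ.neighbors v))
  rw [Δ.sum_card_neighbors, card_univ, Fintype.card_fin] at hcs
  change 4 * Δ.faceCount 2 < n ^ 2 + 12 * n
  nlinarith
end

section
/- Let k ≥ 2, let d ∈ {2k, 2k+1}, and let P be a simplicial d-polytope with vertex set V of cardinality n ≥ d + 2 such that P is neighborly (⌊d/2⌋-neighborly, i.e., k-neighborly). Then for every vertex v ∈ V, the link lk(v, ∂P) has a missing face of cardinality at least k + 1 (equivalently, of dimension at least k). Consequently, if a neighborly (d−1)-sphere has a vertex whose link has all missing faces of dimension k − 1, then that sphere is not combinatorially equivalent to the boundary complex of any simplicial polytope. -/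
open scoped Classical

/-- A simplicial `d`-polytope, given by its vertex set `verts`, a finite set of points affinely
spanning `ℝ^d` such that no vertex lies in the convex hull of the remaining vertices and the
vertex set of every proper face (cut out by a supporting linear functional) is affinely
independent. -/
structure SimplicialPolytope (d : ℕ) where
  verts : Finset (EuclideanSpace ℝ (Fin d))
  span_top : affineSpan ℝ (verts : Set (EuclideanSpace ℝ (Fin d))) = ⊤
  extremal : ∀ v ∈ verts,
    v ∉ convexHull ℝ ((verts : Set (EuclideanSpace ℝ (Fin d))) \ {v})
  simplicial : ∀ (ℓ : EuclideanSpace ℝ (Fin d) →ₗ[ℝ] ℝ) (c : ℝ),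
    (∀ x ∈ convexHull ℝ (verts : Set (EuclideanSpace ℝ (Fin d))), ℓ x ≤ c) →
    {x ∈ convexHull ℝ (verts : Set (EuclideanSpace ℝ (Fin d))) | ℓ x = c} ≠
      convexHull ℝ (verts : Set (EuclideanSpace ℝ (Fin d))) →
    AffineIndependent ℝ
      ((↑) : {x : EuclideanSpace ℝ (Fin d) // x ∈ verts ∧ ℓ x = c} → EuclideanSpace ℝ (Fin d))

namespace SimplicialPolytope

variable {d : ℕ}

/-- The underlying polytope `P = conv(verts)`. -/
def body (P : SimplicialPolytope d) : Set (EuclideanSpace ℝ (Fin d)) :=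
  convexHull ℝ (P.verts : Set (EuclideanSpace ℝ (Fin d)))

/-- `F` is a face of the boundary complex `∂P`: either `F = ∅` or `F` is the set of vertices
lying on a nonempty proper face of `P` cut out by a supporting linear functional. -/
def IsBdryFace (P : SimplicialPolytope d) (F : Finset (EuclideanSpace ℝ (Fin d))) : Prop :=
  F = ∅ ∨ ∃ (ℓ : EuclideanSpace ℝ (Fin d) →ₗ[ℝ] ℝ) (c : ℝ),
    (∀ x ∈ P.body, ℓ x ≤ c) ∧
    {x ∈ P.body | ℓ x = c}.Nonempty ∧
    {x ∈ P.body | ℓ x = c} ≠ P.body ∧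
    (F : Set (EuclideanSpace ℝ (Fin d))) = {x ∈ (P.verts : Set (EuclideanSpace ℝ (Fin d))) | ℓ x = c}

/-- A missing face of `∂P`: a subset of the vertex set which is not a face of `∂P` but all of
whose proper subsets are faces of `∂P`. -/
def IsMissing (P : SimplicialPolytope d) (F : Finset (EuclideanSpace ℝ (Fin d))) : Prop :=
  F ⊆ P.verts ∧ ¬ P.IsBdryFace F ∧ ∀ G ⊂ F, P.IsBdryFace G

/-- `m_i(∂P)`: the number of missing faces of `∂P` of cardinality `i + 1`. -/
noncomputable def mNum (P : SimplicialPolytope d) (i : ℕ) : ℕ :=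
  {F : Finset (EuclideanSpace ℝ (Fin d)) | P.IsMissing F ∧ F.card = i + 1}.ncard

/-- `P` is `j`-neighborly: every `j`-element subset of the vertex set is a face of `∂P`. -/
def Neighborly (P : SimplicialPolytope d) (j : ℕ) : Prop :=
  ∀ F : Finset (EuclideanSpace ℝ (Fin d)), F ⊆ P.verts → F.card = j → P.IsBdryFace F

/-- `G` is a face of the link of the vertex `v` in `∂P`. -/
def IsLinkFace (P : SimplicialPolytope d) (v : EuclideanSpace ℝ (Fin d))
    (G : Finset (EuclideanSpace ℝ (Fin d))) : Prop :=
  v ∉ G ∧ P.IsBdryFace (insert v G)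

/-- A missing face of the link of the vertex `v` in `∂P`: a subset of `verts ∖ {v}` which is
not a face of the link but all of whose proper subsets are faces of the link. -/
def IsLinkMissing (P : SimplicialPolytope d) (v : EuclideanSpace ℝ (Fin d))
    (F : Finset (EuclideanSpace ℝ (Fin d))) : Prop :=
  F ⊆ P.verts.erase v ∧ ¬ P.IsLinkFace v F ∧ ∀ G ⊂ F, P.IsLinkFace v G

/-- `m_i(lk(v, ∂P))`: the number of missing faces of the link of `v` of cardinality `i + 1`. -/
noncomputable def mLink (P : SimplicialPolytope d) (v : EuclideanSpace ℝ (Fin d)) (i : ℕ) : ℕ :=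
  {F : Finset (EuclideanSpace ℝ (Fin d)) | P.IsLinkMissing v F ∧ F.card = i + 1}.ncard

end SimplicialPolytope

/-!
Fix a vertex `v`. Separating `v` from the other vertices and then repeatedly tilting the
separating hyperplane about the face it cuts out, one finds a hyperplane `H` supporting the other
vertices, with `v` strictly beyond it, such that `v` together with the vertices `T` on `H` is not
a face. A minimal `N ⊆ T` for which `N ∪ {v}` is not a face is a missing face of the link of `v`.
If `|N| ≤ k`, then `N` is a face by neighborliness (subsets of faces of a simplicial polytope are
faces), and a positive combination of a functional exposing `N` with the one defining `H` exposes
`N ∪ {v}`, a contradiction.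
-/

open Topology Finset

theorem Finset.exists_pos_forall_add_mul_lt {α : Type*} (s : Finset α) (f g : α → ℝ) {c : ℝ}
    (h : ∀ x ∈ s, f x < c) : ∃ ε > 0, ∀ x ∈ s, f x + ε * g x < c := by
  have hε : ∀ᶠ ε in 𝓝 (0 : ℝ), ∀ x ∈ s, f x + ε * g x < c := by
    refine (Filter.eventually_all_finset s).2 fun x hx => ?_
    have hcont : Continuous fun ε : ℝ => f x + ε * g x := by fun_prop
    exact hcont.continuousAt.eventually_lt continuousAt_const (by simpa using h x hx)
  exact ((hε.filter_mono nhdsWithin_le_nhds).and (self_mem_nhdsWithin (s := Set.Ioi 0))).exists.imp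
    fun ε h => ⟨h.2, h.1⟩

theorem exists_linearMap_eqOn_lt_of_notMem_affineSpan {𝕜 V : Type*} [Field 𝕜] [LinearOrder 𝕜]
    [IsStrictOrderedRing 𝕜] [AddCommGroup V] [Module 𝕜 V] {S : Set V} {t : V}
    (ht : t ∉ affineSpan 𝕜 S) : ∃ (φ : V →ₗ[𝕜] 𝕜) (c : 𝕜), (∀ s ∈ S, φ s = c) ∧ c < φ t := by
  rcases S.eq_empty_or_nonempty with rfl | ⟨s₀, hs₀⟩
  · exact ⟨0, -1, by simp, by simp⟩
  have hs₀' := subset_affineSpan 𝕜 S hs₀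
  have hdir : t - s₀ ∉ (affineSpan 𝕜 S).direction := fun h =>
    ht (by simpa using AffineSubspace.vadd_mem_of_mem_direction h hs₀')
  obtain ⟨f, hft, hf⟩ := Submodule.exists_dual_map_eq_bot_of_notMem hdir inferInstance
  have hfS : ∀ s ∈ S, f s = f s₀ := fun s hs => by
    have := Submodule.mem_map_of_mem (f := f)
      (AffineSubspace.vsub_mem_direction (subset_affineSpan 𝕜 S hs) hs₀')
    rwa [hf, Submodule.mem_bot, vsub_eq_sub, map_sub, sub_eq_zero] at this
  rw [map_sub, sub_ne_zero] at hft
  rcases hft.lt_or_gt with hlt | hlt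
  · exact ⟨-f, -f s₀, fun s hs => by simp [hfS s hs], by simpa using hlt⟩
  · exact ⟨f, f s₀, hfS, hlt⟩

namespace SimplicialPolytope

variable {d : ℕ} {P : SimplicialPolytope d}

local notation "E" => EuclideanSpace ℝ (Fin d)

/-- For `S ⊆ P.verts`: `S` is exactly the vertex set of the face cut out by the supporting
hyperplane `ℓ = c`. -/
def Exposes (P : SimplicialPolytope d) (ℓ : E →ₗ[ℝ] ℝ) (c : ℝ) (S : Finset E) : Prop :=
  (∀ u ∈ S, ℓ u = c) ∧ ∀ u ∈ P.verts, u ∉ S → ℓ u < c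

def IsExposed (P : SimplicialPolytope d) (S : Finset E) : Prop :=
  ∃ (ℓ : E →ₗ[ℝ] ℝ) (c : ℝ), P.Exposes ℓ c S

def Beyond (P : SimplicialPolytope d) (v : E) (ℓ : E →ₗ[ℝ] ℝ) (c : ℝ) : Prop :=
  (∀ u ∈ P.verts.erase v, ℓ u ≤ c) ∧ c < ℓ v

lemma apply_le_of_mem_body {ℓ : E →ₗ[ℝ] ℝ} {c : ℝ} (h : ∀ u ∈ P.verts, ℓ u ≤ c) {x : E}
    (hx : x ∈ P.body) : ℓ x ≤ c :=
  convexHull_min (fun u hu => h u hu) (convex_halfSpace_le ℓ.isLinear c) hx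

lemma sep_body_ne_body {ℓ : E →ₗ[ℝ] ℝ} {c : ℝ} {u : E} (hu : u ∈ P.verts) (hlt : ℓ u < c) :
    {x ∈ P.body | ℓ x = c} ≠ P.body := fun h =>
  hlt.ne (h.symm ▸ subset_convexHull ℝ _ hu : u ∈ {x ∈ P.body | ℓ x = c}).2

lemma Exposes.le {ℓ : E →ₗ[ℝ] ℝ} {c : ℝ} {S : Finset E} (h : P.Exposes ℓ c S) :
    ∀ u ∈ P.verts, ℓ u ≤ c := fun u hu => by
  by_cases huS : u ∈ S
  · exact (h.1 u huS).le
  · exact (h.2 u hu huS).le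

lemma IsExposed.isBdryFace {S : Finset E} (h : P.IsExposed S) (hS : S ⊆ P.verts)
    (hproper : ∃ u ∈ P.verts, u ∉ S) : P.IsBdryFace S := by
  rcases S.eq_empty_or_nonempty with rfl | ⟨s₀, hs₀⟩
  · exact Or.inl rfl
  obtain ⟨ℓ, c, hS_eq, hlt⟩ := h
  obtain ⟨u₀, hu₀, hu₀S⟩ := hproper
  refine Or.inr ⟨ℓ, c, fun x => apply_le_of_mem_body (Exposes.le ⟨hS_eq, hlt⟩),
    ⟨s₀, subset_convexHull ℝ _ (hS hs₀), hS_eq s₀ hs₀⟩, sep_body_ne_body hu₀ (hlt u₀ hu₀ hu₀S), ?_⟩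
  ext x
  refine ⟨fun hx => ⟨hS hx, hS_eq x hx⟩, fun ⟨hxV, hxc⟩ => ?_⟩
  by_contra hxS
  exact (hlt x hxV hxS).ne hxc

lemma IsBdryFace.isExposed {S : Finset E} (h : P.IsBdryFace S) : P.IsExposed S := by
  rcases h with rfl | ⟨ℓ, c, hle, -, -, hS⟩
  · exact ⟨0, 1, by simp, by simp⟩
  have hmem : ∀ u, u ∈ S ↔ u ∈ P.verts ∧ ℓ u = c := fun u => Set.ext_iff.1 hS u
  refine ⟨ℓ, c, fun u hu => ((hmem u).1 hu).2, fun u hu huS => ?_⟩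
  exact (hle u (subset_convexHull ℝ _ hu)).lt_of_ne fun h => huS ((hmem u).2 ⟨hu, h⟩)

lemma IsBdryFace.exists_notMem {S : Finset E} (h : P.IsBdryFace S) (hS : S.Nonempty) :
    ∃ u ∈ P.verts, u ∉ S := by
  rcases h with rfl | ⟨ℓ, c, -, -, hne, hSeq⟩
  · exact absurd hS (by simp)
  by_contra! hall
  have hverts : (P.verts : Set E) ⊆ {x | ℓ x = c} := fun u hu =>
    ((Set.ext_iff.1 hSeq u).1 (hall u hu)).2
  exact hne (Set.sep_eq_self_iff_mem_true.2 fun x hx =>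
    convexHull_min hverts (convex_hyperplane ℓ.isLinear c) hx)

lemma Exposes.notMem_affineSpan_erase {ℓ : E →ₗ[ℝ] ℝ} {c : ℝ} {F : Finset E}
    (h : P.Exposes ℓ c F) (hF : F ⊆ P.verts) (hproper : ∃ w ∈ P.verts, w ∉ F) {u : E}
    (hu : u ∈ F) : u ∉ affineSpan ℝ (F.erase u : Set E) := by
  obtain ⟨w, hw, hwF⟩ := hproper
  have hAI := P.simplicial ℓ c (fun x => apply_le_of_mem_body h.le)
    (sep_body_ne_body hw (h.2 w hw hwF))
  have himage : ((↑) : {x : E // x ∈ P.verts ∧ ℓ x = c} → E) '' {i | ↑i ∈ F.erase u} =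
      (F.erase u : Set E) := by
    ext x
    refine ⟨fun ⟨i, hi, hix⟩ => hix ▸ hi, fun hx => ?_⟩
    have hxF := mem_of_mem_erase hx
    exact ⟨⟨x, hF hxF, h.1 x hxF⟩, hx, rfl⟩
  rw [← himage, hAI.mem_affineSpan_iff ⟨u, hF hu, h.1 u hu⟩]
  simp

lemma IsExposed.erase {F : Finset E} (h : P.IsExposed F) (hF : F ⊆ P.verts)
    (hproper : ∃ w ∈ P.verts, w ∉ F) {u : E} (hu : u ∈ F) : P.IsExposed (F.erase u) := by
  obtain ⟨ℓ, c, hexp⟩ := h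
  obtain ⟨φ, c₀, hφ, hφu⟩ :=
    exists_linearMap_eqOn_lt_of_notMem_affineSpan (hexp.notMem_affineSpan_erase hF hproper hu)
  obtain ⟨ε, hε, hsmall⟩ := (P.verts \ F).exists_pos_forall_add_mul_lt (fun x => ℓ x)
    (fun x => c₀ - φ x) (fun x hx => hexp.2 x (mem_sdiff.1 hx).1 (mem_sdiff.1 hx).2)
  refine ⟨ℓ - ε • φ, c - ε * c₀, fun x hx => ?_, fun x hx hxF => ?_⟩
  · simp [hexp.1 x (mem_of_mem_erase hx), hφ x hx]
  · simp only [LinearMap.sub_apply, LinearMap.smul_apply, smul_eq_mul]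
    by_cases hxu : x = u
    · subst hxu
      rw [hexp.1 x hu]
      nlinarith
    · have := hsmall x (mem_sdiff.2 ⟨hx, fun h => hxF (mem_erase.2 ⟨hxu, h⟩)⟩)
      linarith

lemma IsExposed.of_subset {F S : Finset E} (h : P.IsExposed F) (hF : F ⊆ P.verts)
    (hproper : ∃ w ∈ P.verts, w ∉ F) (hSF : S ⊆ F) : P.IsExposed S := by
  induction hn : (F \ S).card generalizing F with
  | zero =>
    rw [card_eq_zero, sdiff_eq_empty_iff_subset] at hn
    rwa [← hn.antisymm hSF]
  | succ n ih =>
    obtain ⟨u, hu⟩ : (F \ S).Nonempty := card_pos.1 (by omega)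
    obtain ⟨huF, huS⟩ := mem_sdiff.1 hu
    refine ih (h.erase hF hproper huF) ((erase_subset _ _).trans hF)
      (hproper.imp fun w ⟨hw, hwF⟩ => ⟨hw, fun h => hwF (mem_of_mem_erase h)⟩)
      (fun x hx => mem_erase.2 ⟨ne_of_mem_of_not_mem hx huS, hSF hx⟩) ?_
    rw [erase_sdiff_comm, card_erase_of_mem hu, hn, Nat.add_sub_cancel]

lemma Neighborly.isExposed {k : ℕ} (h : P.Neighborly k) (hk : k < P.verts.card) {S : Finset E}
    (hS : S ⊆ P.verts) (hSk : S.card ≤ k) : P.IsExposed S := by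
  obtain ⟨F, hSF, hFV, hFk⟩ := exists_subsuperset_card_eq hS hSk hk.le
  exact (h F hFV hFk).isExposed.of_subset hFV (exists_mem_notMem_of_card_lt_card (hFk ▸ hk)) hSF

lemma Exposes.insert_of_beyond {ℓ₂ ℓ : E →ₗ[ℝ] ℝ} {c₂ c : ℝ} {N : Finset E} {v : E}
    (hN : P.Exposes ℓ₂ c₂ N) (hv : v ∈ P.verts) (hvN : v ∉ N) (hb : P.Beyond v ℓ c)
    (hℓN : ∀ u ∈ N, ℓ u = c) : P.IsExposed (insert v N) := by
  have hv₂ := hN.2 v hv hvN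
  -- the weights make the excesses of `v` over the two levels cancel
  set a := ℓ v - c
  set b := c₂ - ℓ₂ v
  have ha : 0 < a := sub_pos.2 hb.2
  have hb' : 0 < b := sub_pos.2 hv₂
  refine ⟨a • ℓ₂ + b • ℓ, a * c₂ + b * c, fun u hu => ?_, fun u hu huN => ?_⟩
  · simp only [LinearMap.add_apply, LinearMap.smul_apply, smul_eq_mul]
    rcases mem_insert.1 hu with rfl | hu
    · ring
    · rw [hN.1 u hu, hℓN u hu]
  · simp only [LinearMap.add_apply, LinearMap.smul_apply, smul_eq_mul]
    have h₂ := hN.2 u hu fun h => huN (mem_insert_of_mem h)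
    have h₁ := hb.1 u (mem_erase.2 ⟨fun h => huN (h ▸ mem_insert_self v N), hu⟩)
    nlinarith

/-- Tilt the hyperplane `ℓ = c` about the face through `v` until it meets a further vertex. -/
lemma Beyond.exists_ssubset {v : E} {ℓ : E →ₗ[ℝ] ℝ} {c : ℝ} (hb : P.Beyond v ℓ c)
    (hface : P.IsBdryFace (insert v ((P.verts.erase v).filter (ℓ · = c)))) :
    ∃ (ℓ' : E →ₗ[ℝ] ℝ) (c' : ℝ), P.Beyond v ℓ' c' ∧
      (P.verts.erase v).filter (ℓ · = c) ⊂ (P.verts.erase v).filter (ℓ' · = c') := by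
  set W := P.verts.erase v
  set T := W.filter (ℓ · = c)
  obtain ⟨ℓ₁, c₁, hT₁, hlt₁⟩ := hface.isExposed
  have hT₁' : ∀ u ∈ T, ℓ₁ u = c₁ := fun u hu => hT₁ u (mem_insert_of_mem hu)
  have hv₁ : ℓ₁ v = c₁ := hT₁ v (mem_insert_self v T)
  set D := W.filter (ℓ · ≠ c)
  have hD : ∀ u ∈ D, ℓ u < c ∧ ℓ₁ u < c₁ := fun u hu => by
    obtain ⟨huW, huc⟩ := mem_filter.1 hu
    obtain ⟨huv, huV⟩ := mem_erase.1 huW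
    refine ⟨(hb.1 u huW).lt_of_ne huc, hlt₁ u huV ?_⟩
    rw [mem_insert, mem_filter, not_or]
    exact ⟨huv, fun h => huc h.2⟩
  have hDne : D.Nonempty := by
    obtain ⟨u, huV, huT⟩ := hface.exists_notMem (insert_nonempty _ _)
    rw [mem_insert, mem_filter, not_or, not_and] at huT
    exact ⟨u, mem_filter.2 ⟨mem_erase.2 ⟨huT.1, huV⟩, huT.2 (mem_erase.2 ⟨huT.1, huV⟩)⟩⟩
  obtain ⟨u₂, hu₂, hmin⟩ := D.exists_min_image (fun u => (c - ℓ u) / (c₁ - ℓ₁ u)) hDne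
  set s := (c - ℓ u₂) / (c₁ - ℓ₁ u₂)
  have hs₂ : s * (c₁ - ℓ₁ u₂) = c - ℓ u₂ := div_mul_cancel₀ _ (sub_pos.2 (hD u₂ hu₂).2).ne'
  have hs : ∀ u ∈ D, s * (c₁ - ℓ₁ u) ≤ c - ℓ u := fun u hu =>
    (le_div_iff₀ (sub_pos.2 (hD u hu).2)).1 (hmin u hu)
  have heval : ∀ x, (ℓ - s • ℓ₁) x = ℓ x - s * ℓ₁ x := fun x => rfl
  refine ⟨ℓ - s • ℓ₁, c - s * c₁, ⟨fun u hu => ?_, ?_⟩, ?_⟩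
  · rw [heval]
    by_cases huc : ℓ u = c
    · rw [huc, hT₁' u (mem_filter.2 ⟨hu, huc⟩)]
    · linarith [hs u (mem_filter.2 ⟨hu, huc⟩)]
  · rw [heval, hv₁]
    linarith [hb.2]
  · have hu₂T : u₂ ∉ T := fun h => (mem_filter.1 hu₂).2 (mem_filter.1 h).2
    refine (ssubset_iff_of_subset fun u hu => ?_).2 ⟨u₂, ?_, hu₂T⟩
    · obtain ⟨huW, huc⟩ := mem_filter.1 hu
      exact mem_filter.2 ⟨huW, by rw [heval, huc, hT₁' u hu]⟩
    · exact mem_filter.2 ⟨(mem_filter.1 hu₂).1, by rw [heval]; linarith⟩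

lemma exists_beyond_not_isBdryFace {v : E} (hv : v ∈ P.verts) :
    ∃ (ℓ : E →ₗ[ℝ] ℝ) (c : ℝ), P.Beyond v ℓ c ∧
      ¬ P.IsBdryFace (insert v ((P.verts.erase v).filter (ℓ · = c))) := by
  have hvW : v ∉ convexHull ℝ (P.verts.erase v : Set E) := by
    rw [coe_erase]
    exact P.extremal v hv
  obtain ⟨f, u₁, hfW, hfv⟩ := geometric_hahn_banach_closed_point (convex_convexHull ℝ _)
    ((P.verts.erase v).finite_toSet.isClosed_convexHull ℝ) hvW
  by_contra! hall
  have hgrow : ∀ m : ℕ, ∃ (ℓ : E →ₗ[ℝ] ℝ) (c : ℝ), P.Beyond v ℓ c ∧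
      m ≤ ((P.verts.erase v).filter (ℓ · = c)).card := by
    intro m
    induction m with
    | zero =>
      exact ⟨f, u₁, ⟨fun u hu => (hfW u (subset_convexHull ℝ _ hu)).le, hfv⟩, Nat.zero_le _⟩
    | succ m ih =>
      obtain ⟨ℓ, c, hb, hm⟩ := ih
      obtain ⟨ℓ', c', hb', hss⟩ := hb.exists_ssubset (hall ℓ c hb)
      exact ⟨ℓ', c', hb', hm.trans_lt (card_lt_card hss)⟩
  obtain ⟨ℓ, c, -, hcard⟩ := hgrow ((P.verts.erase v).card + 1)
  have := card_filter_le (P.verts.erase v) (ℓ · = c)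
  omega

lemma exists_isLinkMissing_subset {v : E} {T : Finset E} (hT : T ⊆ P.verts.erase v)
    (hnot : ¬ P.IsLinkFace v T) : ∃ N ⊆ T, P.IsLinkMissing v N := by
  obtain ⟨N, hNT, hmin⟩ := exists_minimal_le_of_wellFoundedLT (¬ P.IsLinkFace v ·) T hnot
  exact ⟨N, hNT, hNT.trans hT, hmin.prop, fun G hG => not_not.1 (hmin.not_prop_of_lt hG)⟩

theorem Neighborly.exists_isLinkMissing {k : ℕ} (hngh : P.Neighborly k)
    (hn : k + 1 < P.verts.card) {v : E} (hv : v ∈ P.verts) :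
    ∃ F : Finset E, P.IsLinkMissing v F ∧ k + 1 ≤ F.card := by
  obtain ⟨ℓ, c, hb, hnot⟩ := exists_beyond_not_isBdryFace hv
  obtain ⟨N, hNT, hN⟩ :=
    exists_isLinkMissing_subset (filter_subset (ℓ · = c) _) fun h => hnot h.2
  refine ⟨N, hN, ?_⟩
  by_contra! hsmall
  have hNV : N ⊆ P.verts := hN.1.trans (erase_subset _ _)
  have hvN : v ∉ N := fun h => (mem_erase.1 (hN.1 h)).1 rfl
  obtain ⟨ℓ₂, c₂, h₂⟩ := hngh.isExposed (by omega) hNV (by omega)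
  have hface := (h₂.insert_of_beyond hv hvN hb fun u hu => (mem_filter.1 (hNT hu)).2).isBdryFace
    (insert_subset hv hNV)
    (exists_mem_notMem_of_card_lt_card ((card_insert_le v N).trans_lt (by omega)))
  exact hN.2.1 ⟨hvN, hface⟩

end SimplicialPolytope

theorem statement14_general (k d n : ℕ) (hd : d = 2 * k ∨ d = 2 * k + 1)
    (P : SimplicialPolytope d) (hcard : P.verts.card = n) (hn : d + 2 ≤ n)
    (hngh : P.Neighborly k) :
    ∀ v ∈ P.verts, ∃ F : Finset (EuclideanSpace ℝ (Fin d)),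
      P.IsLinkMissing v F ∧ k + 1 ≤ F.card :=
  fun _ hv => hngh.exists_isLinkMissing (by omega) hv

/-- Let `k ≥ 2`, `d ∈ {2k, 2k+1}`, and let `P` be a neighborly
(`k`-neighborly) simplicial `d`-polytope with `n ≥ d + 2` vertices. Then for every vertex `v`
of `P`, the link of `v` in `∂P` has a missing face of cardinality at least `k + 1`. -/
theorem statement14 (k d n : ℕ) (hk : 2 ≤ k) (hd : d = 2 * k ∨ d = 2 * k + 1)
    (P : SimplicialPolytope d) (hcard : P.verts.card = n) (hn : d + 2 ≤ n)
    (hngh : P.Neighborly k) :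
    ∀ v ∈ P.verts, ∃ F : Finset (EuclideanSpace ℝ (Fin d)),
      P.IsLinkMissing v F ∧ k + 1 ≤ F.card :=
  statement14_general k d n hd P hcard hn hngh
end
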